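/- Let Y be a p1×p2 matrix, U ∈ O(p1,r), and let Û = argmax over U' ∈ C of tr(U'ᵀ Y Yᵀ U'), where C ⊆ O(p1,r) contains U. If Y = UΓVᵀ + Z with Γ = diag(λ1,...,λr), λr > 0, and V ∈ O(p2,r), then ‖ÛÛᵀ − UUᵀ‖_F² ≤ (2/λr²)·⟨UΓ²Uᵀ − YYᵀ, UUᵀ − ÛÛᵀ⟩. -/

import Mathlib

/-!
Write `P = ÛÛᵀ`, `Q = UUᵀ` and `sᵢ = (UᵀPU)ᵢᵢ`. Since `1 - P` is an orthogonal projection,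
`sᵢ ≤ (UᵀU)ᵢᵢ = 1`. Both projections have trace `r`, so `‖P - Q‖_F² = 2 ∑ᵢ (1 - sᵢ)`, while
`⟨UΓ²Uᵀ, Q - P⟩ = ∑ᵢ λᵢ² (1 - sᵢ) ≥ λ_r² ∑ᵢ (1 - sᵢ)`. Optimality of `Û` gives
`⟨YYᵀ, Q - P⟩ ≤ 0`, and subtracting the two yields the inequality.
-/

open Matrix

/-- Frobenius norm of a real matrix. -/
noncomputable def frob {m n : ℕ} (A : Matrix (Fin m) (Fin n) ℝ) : ℝ :=
  Real.sqrt (∑ i, ∑ j, (A i j) ^ 2)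

section Identities

variable {R m n : Type*} [CommRing R] [Fintype m] [Fintype n]

theorem trace_transpose_mul_mul_transpose (A : Matrix m m R) (U : Matrix m n R) :
    trace (Aᵀ * (U * Uᵀ)) = trace (Uᵀ * A * U) := by
  rw [← trace_transpose, transpose_mul, transpose_mul, transpose_transpose, transpose_transpose,
    Matrix.mul_assoc, trace_mul_comm]

theorem trace_mul_diagonal_mul_transpose_mul [DecidableEq n] (U : Matrix m n R) (g : n → R)
    (P : Matrix m m R) : trace (U * diagonal g * Uᵀ * P) = ∑ i, g i * (Uᵀ * P * U) i i := by
  rw [Matrix.mul_assoc (U * diagonal g), Matrix.mul_assoc U, trace_mul_comm U, Matrix.mul_assoc]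
  simp only [trace, diag_apply, diagonal_mul]

variable [DecidableEq n] {U W : Matrix m n R}

theorem isIdempotentElem_mul_transpose (hW : Wᵀ * W = 1) : IsIdempotentElem (W * Wᵀ) := by
  rw [IsIdempotentElem, Matrix.mul_assoc, ← Matrix.mul_assoc Wᵀ, hW, Matrix.one_mul]

theorem trace_mul_transpose_mul_self (hW : Wᵀ * W = 1) :
    trace (W * Wᵀ * (W * Wᵀ)) = Fintype.card n := by
  rw [(isIdempotentElem_mul_transpose hW).eq, trace_mul_comm, hW, trace_one]

theorem trace_conj_diagonal_mul_projection_sub (hU : Uᵀ * U = 1) (g : n → R) :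
    trace ((U * diagonal g * Uᵀ)ᵀ * (U * Uᵀ - W * Wᵀ))
      = ∑ i, g i * (1 - (Uᵀ * (W * Wᵀ) * U) i i) := by
  have hUU : Uᵀ * (U * Uᵀ) * U = 1 := by rw [← Matrix.mul_assoc, hU, Matrix.one_mul, hU]
  rw [transpose_mul, transpose_mul, transpose_transpose, diagonal_transpose, ← Matrix.mul_assoc,
    mul_sub, trace_sub, trace_mul_diagonal_mul_transpose_mul, trace_mul_diagonal_mul_transpose_mul,
    hUU, ← Finset.sum_sub_distrib]
  simp only [one_apply_eq, mul_sub, mul_one]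

end Identities

theorem diag_transpose_mul_projection_mul_le {m n k : Type*} [Fintype m] [Fintype n]
    [DecidableEq m] [DecidableEq n] {W : Matrix m n ℝ} (hW : Wᵀ * W = 1) (U : Matrix m k ℝ) (i : k) :
    (Uᵀ * (W * Wᵀ) * U) i i ≤ (Uᵀ * U) i i := by
  have hN : Uᵀ * U - Uᵀ * (W * Wᵀ) * U = ((1 - W * Wᵀ) * U)ᵀ * ((1 - W * Wᵀ) * U) := by
    have hsymm : (1 - W * Wᵀ)ᵀ = 1 - W * Wᵀ := by
      rw [transpose_sub, transpose_one, transpose_mul, transpose_transpose]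
    rw [transpose_mul, hsymm, ← Matrix.mul_assoc (Uᵀ * _), Matrix.mul_assoc Uᵀ (1 - W * Wᵀ),
      (isIdempotentElem_mul_transpose hW).one_sub.eq, Matrix.mul_sub, Matrix.sub_mul,
      Matrix.mul_one]
  have hNN : 0 ≤ (((1 - W * Wᵀ) * U)ᵀ * ((1 - W * Wᵀ) * U) : Matrix k k ℝ) i i :=
    Finset.sum_nonneg fun j _ => mul_self_nonneg _
  rw [← hN, Matrix.sub_apply] at hNN
  linarith

theorem frob_sq_eq_trace {m n : ℕ} (A : Matrix (Fin m) (Fin n) ℝ) :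
    frob A ^ 2 = trace (Aᵀ * A) := by
  rw [frob, Real.sq_sqrt (by positivity), Finset.sum_comm]
  simp only [trace, diag_apply, mul_apply, transpose_apply, sq]

section Projections

variable {p r : ℕ} {U W : Matrix (Fin p) (Fin r) ℝ}

theorem frob_sq_projection_sub (hU : Uᵀ * U = 1) (hW : Wᵀ * W = 1) :
    frob (W * Wᵀ - U * Uᵀ) ^ 2 = 2 * trace ((U * Uᵀ)ᵀ * (U * Uᵀ - W * Wᵀ)) := by
  rw [frob_sq_eq_trace]
  simp only [transpose_sub, transpose_mul, transpose_transpose]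
  rw [sub_mul, mul_sub, mul_sub, mul_sub, trace_sub, trace_sub, trace_sub, trace_sub,
    trace_mul_transpose_mul_self hU, trace_mul_transpose_mul_self hW, trace_mul_comm (W * Wᵀ)]
  ring

theorem le_trace_conj_diagonal_mul_projection_sub (hU : Uᵀ * U = 1) (hW : Wᵀ * W = 1)
    {g : Fin r → ℝ} {c : ℝ} (hg : ∀ i, c ≤ g i) :
    c / 2 * frob (W * Wᵀ - U * Uᵀ) ^ 2 ≤ trace ((U * diagonal g * Uᵀ)ᵀ * (U * Uᵀ - W * Wᵀ)) := by
  have hQ := trace_conj_diagonal_mul_projection_sub (W := W) hU (fun _ => 1)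
  rw [diagonal_one, Matrix.mul_one] at hQ
  rw [frob_sq_projection_sub hU hW, hQ, trace_conj_diagonal_mul_projection_sub hU,
    ← mul_assoc, div_mul_cancel₀ c two_ne_zero, Finset.mul_sum]
  refine Finset.sum_le_sum fun i _ => ?_
  have hle := diag_transpose_mul_projection_mul_le hW U i
  rw [hU, one_apply_eq] at hle
  rw [one_mul]
  exact mul_le_mul_of_nonneg_right (hg i) (sub_nonneg.2 hle)

end Projections

theorem estimator_basic_inequality {p1 p2 r : ℕ} (hr : 0 < r)
    (C : Set (Matrix (Fin p1) (Fin r) ℝ))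
    (hC : ∀ W ∈ C, Wᵀ * W = 1)
    (U Uhat : Matrix (Fin p1) (Fin r) ℝ) (hU : U ∈ C) (hUhat : Uhat ∈ C)
    (Y : Matrix (Fin p1) (Fin p2) ℝ)
    (l : Fin r → ℝ) (hpos : ∀ i, 0 < l i)
    (hmono : ∀ i j : Fin r, i ≤ j → l j ≤ l i)
    (hmax : ∀ W ∈ C, trace (Wᵀ * (Y * Yᵀ) * W) ≤ trace (Uhatᵀ * (Y * Yᵀ) * Uhat)) :
    frob (Uhat * Uhatᵀ - U * Uᵀ) ^ 2 ≤
      2 / (l ⟨r - 1, by omega⟩) ^ 2 *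
        trace ((U * diagonal (fun i => (l i) ^ 2) * Uᵀ - Y * Yᵀ)ᵀ *
          (U * Uᵀ - Uhat * Uhatᵀ)) := by
  set lmin := l ⟨r - 1, by omega⟩
  have hlmin : 0 < lmin := hpos _
  have hcurv := le_trace_conj_diagonal_mul_projection_sub (hC U hU) (hC Uhat hUhat)
    (c := lmin ^ 2) (g := fun i => l i ^ 2) fun i =>
      pow_le_pow_left₀ hlmin.le (hmono i _ (Nat.le_sub_one_of_lt i.isLt)) 2
  have hopt : trace ((Y * Yᵀ)ᵀ * (U * Uᵀ - Uhat * Uhatᵀ)) ≤ 0 := by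
    rw [mul_sub, trace_sub, trace_transpose_mul_mul_transpose, trace_transpose_mul_mul_transpose]
    exact sub_nonpos.2 (hmax U hU)
  rw [transpose_sub, sub_mul, trace_sub]
  calc frob (Uhat * Uhatᵀ - U * Uᵀ) ^ 2
      = 2 / lmin ^ 2 * (lmin ^ 2 / 2 * frob (Uhat * Uhatᵀ - U * Uᵀ) ^ 2) := by field_simp
    _ ≤ _ := by gcongr; linarith
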